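/- arXiv:2512.17437 — 2 statements merged into one kernel-verified Lean document; each statement's English description precedes it below -/
import Mathlib

section
/- If z has strictly positive imaginary part, then arg(z), arg(1/(1-z)), and arg((z-1)/z) are each in the open interval (0, π) and sum to π. -/
open Complex Real Set

lemma arg_mem_Ioo_of_im_pos {w : ℂ} (h : 0 < w.im) :
    Complex.arg w ∈ Set.Ioo 0 Real.pi := by
  refine ⟨lt_of_le_of_ne (Complex.arg_nonneg_iff.2 h.le) ?_, Complex.arg_lt_pi_iff.2 (Or.inr h.ne')⟩
  intro e
  have := (Complex.arg_eq_zero_iff.1 e.symm).2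
  exact h.ne' this

theorem dihedral_angles (z : ℂ) (hz : 0 < z.im) :
    Complex.arg z ∈ Set.Ioo 0 Real.pi ∧
    Complex.arg (1 / (1 - z)) ∈ Set.Ioo 0 Real.pi ∧
    Complex.arg ((z - 1) / z) ∈ Set.Ioo 0 Real.pi ∧
    Complex.arg z + Complex.arg (1 / (1 - z)) + Complex.arg ((z - 1) / z) = Real.pi := by
  have hz0 : z ≠ 0 := fun h => by simp [h] at hz
  have h1z : (1 : ℂ) - z ≠ 0 := fun h => by
    have : z.im = 0 := by
      have := congrArg Complex.im h
      simpa using this.symm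
    exact hz.ne' this
  have him1 : 0 < ((1 : ℂ) / (1 - z)).im := by
    rw [Complex.div_im]
    simp only [Complex.one_re, Complex.one_im, Complex.sub_im, Complex.sub_re]
    have : 0 < Complex.normSq (1 - z) := Complex.normSq_pos.2 h1z
    rw [div_sub_div_same, show (0:ℝ) * (1 - z.re) - 1 * (0 - z.im) = z.im by ring]
    positivity
  have him2 : 0 < ((z - 1) / z).im := by
    rw [Complex.div_im]
    have hns : 0 < Complex.normSq z := Complex.normSq_pos.2 hz0
    simp only [Complex.sub_im, Complex.sub_re, Complex.one_im, Complex.one_re]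
    rw [sub_zero, div_sub_div_same, show z.im * z.re - (z.re - 1) * z.im = z.im by ring]
    positivity
  have m1 := arg_mem_Ioo_of_im_pos hz
  have m2 := arg_mem_Ioo_of_im_pos him1
  have m3 := arg_mem_Ioo_of_im_pos him2
  refine ⟨m1, m2, m3, ?_⟩
  have hn2 : (1 : ℂ) / (1 - z) ≠ 0 := fun h => by simp [h] at him1
  have hn3 : (z - 1) / z ≠ 0 := fun h => by simp [h] at him2
  have hprod : z * ((1 : ℂ) / (1 - z)) * ((z - 1) / z) = -1 := by
    field_simp
    ring
  have hang : (Complex.arg (-1 : ℂ) : Real.Angle) =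
      (Complex.arg z : Real.Angle) + Complex.arg (1 / (1 - z)) + Complex.arg ((z - 1) / z) := by
    rw [← hprod, Complex.arg_mul_coe_angle (mul_ne_zero hz0 hn2) hn3,
      Complex.arg_mul_coe_angle hz0 hn2]
  rw [Complex.arg_neg_one] at hang
  rw [← Real.Angle.coe_add, ← Real.Angle.coe_add] at hang
  obtain ⟨k, hk⟩ := Real.Angle.angle_eq_iff_two_pi_dvd_sub.1 hang.symm
  have hpi : 0 < Real.pi := Real.pi_pos
  have hsum : Complex.arg z + Complex.arg (1 / (1 - z)) + Complex.arg ((z - 1) / z)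
      = Real.pi + 2 * Real.pi * k := by linarith [hk]
  have hlb : (0 : ℝ) < Real.pi + 2 * Real.pi * k := by
    rw [← hsum]; have := m1.1; have := m2.1; have := m3.1; linarith
  have hub : Real.pi + 2 * Real.pi * k < 3 * Real.pi := by
    rw [← hsum]; have := m1.2; have := m2.2; have := m3.2; linarith
  have hk0 : k = 0 := by
    have h1 : (-1 : ℝ) < k := by nlinarith
    have h2 : (k : ℝ) < 1 := by nlinarith
    exact_mod_cast (by
      have := Int.lt_iff_add_one_le.mp (by exact_mod_cast h2 : k < 1)
      have := Int.lt_iff_add_one_le.mp (by exact_mod_cast h1 : (-1 : ℤ) < k)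
      omega : k = 0)
  rw [hsum, hk0]; push_cast; ring
end

section
/- For the ordered Thurston triangulation of the figure-eight knot complement, the FAMED identity holds: with A = [[1,-2],[0,4]], B = [[-1,-1],[0,2]], 𝒜 = [[0,1,1,-1],[-1,1,1,0],[-1,0,1,0],[0,1,0,-1]], ℬ the 4×2 matrix [[0,0],[0,0],[1,0],[0,1]], 𝒳₀ = [[0,1,0,0],[0,0,1,0]], and ℰ = [[1,0],[0,-1]], one has B⁻¹A = M + Mᵀ + (ℰ + I₂)/2 where M = 𝒳₀ 𝒜⁻¹ ℬ ℰ, and the common value is [[-1,0],[0,2]]. -/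
theorem fig8_FAMED_identity :
    let A : Matrix (Fin 2) (Fin 2) ℚ := !![1, -2; 0, 4]
    let B : Matrix (Fin 2) (Fin 2) ℚ := !![(-1 : ℚ), -1; 0, 2]
    let 𝒜 : Matrix (Fin 4) (Fin 4) ℚ := !![0, 1, 1, -1; -1, 1, 1, 0; -1, 0, 1, 0; 0, 1, 0, -1]
    let ℬ : Matrix (Fin 4) (Fin 2) ℚ := !![0, 0; 0, 0; 1, 0; 0, 1]
    let 𝒳₀ : Matrix (Fin 2) (Fin 4) ℚ := !![0, 1, 0, 0; 0, 0, 1, 0]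
    let ℰ : Matrix (Fin 2) (Fin 2) ℚ := !![1, 0; 0, -1]
    let M : Matrix (Fin 2) (Fin 2) ℚ := 𝒳₀ * 𝒜⁻¹ * ℬ * ℰ
    B⁻¹ * A = M + Matrix.transpose M + (2 : ℚ)⁻¹ • (ℰ + 1) ∧
    B⁻¹ * A = !![(-1 : ℚ), 0; 0, 2] := by
  intro A B 𝒜 ℬ 𝒳₀ ℰ M
  have h𝒜 : 𝒜⁻¹ = !![1, 0, -1, -1; 0, 1, -1, 0; 1, 0, 0, -1; 0, 1, -1, -1] := by
    apply Matrix.inv_eq_right_inv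
    show 𝒜 * _ = 1
    ext i j
    fin_cases i <;> fin_cases j <;>
      norm_num [𝒜, Matrix.mul_apply, Fin.sum_univ_succ, Matrix.one_apply, Fin.ext_iff]
  have hB : B⁻¹ = !![(-1 : ℚ), -1/2; 0, 1/2] := by
    apply Matrix.inv_eq_right_inv
    show B * _ = 1
    ext i j
    fin_cases i <;> fin_cases j <;>
      norm_num [B, Matrix.mul_apply, Fin.sum_univ_succ, Matrix.one_apply, Fin.ext_iff]
  have hM : M = !![(-1 : ℚ), 0; 0, 1] := by
    show 𝒳₀ * 𝒜⁻¹ * ℬ * ℰ = _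
    rw [h𝒜]
    ext i j
    fin_cases i <;> fin_cases j <;>
      norm_num [𝒳₀, ℬ, ℰ, Matrix.mul_apply, Fin.sum_univ_succ]
  have hL : B⁻¹ * A = !![(-1 : ℚ), 0; 0, 2] := by
    rw [hB]
    ext i j
    fin_cases i <;> fin_cases j <;>
      norm_num [A, Matrix.mul_apply, Fin.sum_univ_succ]
  refine ⟨?_, hL⟩
  have hT : Matrix.transpose !![(-1 : ℚ), 0; 0, 1] = !![(-1 : ℚ), 0; 0, 1] := by
    ext i j
    fin_cases i <;> fin_cases j <;> rfl
  rw [hL, hM, hT]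
  ext i j
  fin_cases i <;> fin_cases j <;>
    norm_num [ℰ, Matrix.one_apply, Fin.ext_iff]
end
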